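/- Let 0 < ε < 1 and let 𝒮 be a martingale ε-sparse family of subintervals of [0,1). Let L be a subinterval of [0,1), let K ∈ 𝐊 with L ⊆ K, and set J := K^m. Let 𝒮' be the family of all I ∈ 𝒮 with I ⊆ L such that w_k and σ_k vanish identically on I ∩ J. There exists a constant C(p) > 0, depending only on p and independent of k, ε, 𝒮, L, K, and the choices of the intervals I(J), such that Σ_{I ∈ 𝒮'} ⟨w_k⟩_I^p·⟨σ_k⟩_I·|I| ≤ C(p)·w_k(L)/(1−ε) and Σ_{I ∈ 𝒮'} ⟨σ_k⟩_I^{p'}·⟨w_k⟩_I·|I| ≤ C(p)·σ_k(L)/(1−ε), where p' := p/(p−1). -/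

import Mathlib

open MeasureTheory Set Filter

noncomputable section

namespace RTpaper

/-- The half-open interval `[a, b)` represented by the pair `(a, b)`. -/
def ivSet (I : ℝ × ℝ) : Set ℝ := Set.Ico I.1 I.2

/-- The length of the interval represented by `I`. -/
def len (I : ℝ × ℝ) : ℝ := I.2 - I.1

/-- The middle triadic child of an interval. -/
def mid (I : ℝ × ℝ) : ℝ × ℝ := (I.1 + (I.2 - I.1) / 3, I.2 - (I.2 - I.1) / 3)

/-- The families `𝐊ᵢ` of the Reguera–Thiele construction. -/
def Kfam (k : ℕ) : ℕ → Set (ℝ × ℝ)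
  | 0 => {((0 : ℝ), (1 : ℝ))}
  | (i + 1) =>
      {I | ∃ K ∈ Kfam k i, ∃ j : ℕ, j < 3 ^ (k - 1) ∧
        I = ((mid K).1 + (j : ℝ) * ((3 : ℝ) ^ (1 - (k : ℤ)) * len (mid K)),
             (mid K).1 + ((j : ℝ) + 1) * ((3 : ℝ) ^ (1 - (k : ℤ)) * len (mid K)))}

/-- The families `𝐉ᵢ` (of interest for `i ≥ 1`). -/
def Jfam (k i : ℕ) : Set (ℝ × ℝ) := {J | ∃ K ∈ Kfam k (i - 1), J = mid K}

/-- The family `𝐊 = ⋃ᵢ 𝐊ᵢ`. -/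
def KK (k : ℕ) : Set (ℝ × ℝ) := ⋃ i, Kfam k i

/-- The family `𝐉 = ⋃_{i ≥ 1} 𝐉ᵢ`. -/
def JJ (k : ℕ) : Set (ℝ × ℝ) := ⋃ i, Jfam k (i + 1)

/-- The chosen triadic interval `I(J)` adjacent to `J` of length `3^{1-k}|J|`, encoded by a
choice function `ch` deciding, for each `J`, whether `I(J)` lies to the right (`true`) or to
the left (`false`) of `J`. -/
def IJ (k : ℕ) (ch : ℝ × ℝ → Bool) (J : ℝ × ℝ) : ℝ × ℝ :=
  if ch J then (J.2, J.2 + (3 : ℝ) ^ (1 - (k : ℤ)) * len J)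
  else (J.1 - (3 : ℝ) ^ (1 - (k : ℤ)) * len J, J.1)

/-- The weight `w_k = Σ_{i ≥ 1} Σ_{J ∈ 𝐉ᵢ} (3^k/(3^{k-1}+1))^i · 1_{I(J)}`. -/
def wgt (k : ℕ) (ch : ℝ × ℝ → Bool) (x : ℝ) : ℝ :=
  ∑' i : ℕ, ∑' J : ↥(Jfam k (i + 1)),
    Set.indicator (ivSet (IJ k ch (J : ℝ × ℝ)))
      (fun _ => ((3 : ℝ) ^ k / ((3 : ℝ) ^ (k - 1) + 1)) ^ (i + 1)) x

/-- The weight `σ_k = w_k^{1-p}` on `{w_k > 0}`, and `0` elsewhere. -/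
def sgm (p : ℝ) (k : ℕ) (ch : ℝ × ℝ → Bool) (x : ℝ) : ℝ :=
  if 0 < wgt k ch x then wgt k ch x ^ (1 - p) else 0

/-- `u(I) = ∫_I u`. -/
def mass (u : ℝ → ℝ) (I : ℝ × ℝ) : ℝ := ∫ x in ivSet I, u x

/-- `⟨u⟩_I = u(I)/|I|`. -/
def avg (u : ℝ → ℝ) (I : ℝ × ℝ) : ℝ := mass u I / len I

/-- `ch_𝐊(K)`: the members of `𝐊_{i+1}` contained in `K ∈ 𝐊ᵢ`. -/
def chK (k : ℕ) (K : ℝ × ℝ) : Set (ℝ × ℝ) :=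
  {K' | ∃ i, K ∈ Kfam k i ∧ K' ∈ Kfam k (i + 1) ∧ ivSet K' ⊆ ivSet K}

/-- Triadic intervals of `ℝ`. -/
def IsTriadic (I : ℝ × ℝ) : Prop :=
  ∃ n j : ℤ, I.1 = (j : ℝ) * (3 : ℝ) ^ (-n) ∧ I.2 = ((j : ℝ) + 1) * (3 : ℝ) ^ (-n)

/-- Maximal members of `S` strictly contained in `R`. -/
def maxIn (S : Set (ℝ × ℝ)) (R : ℝ × ℝ) : Set (ℝ × ℝ) :=
  {Q | Q ∈ S ∧ ivSet Q ⊂ ivSet R ∧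
    ∀ Q' ∈ S, ivSet Q ⊆ ivSet Q' → ivSet Q' ⊂ ivSet R → ivSet Q' = ivSet Q}

/-- Martingale `ε`-sparse families of (half-open) intervals. -/
def MSparse (ε : ℝ) (S : Set (ℝ × ℝ)) : Prop :=
  S.Countable ∧ (∀ I ∈ S, I.1 < I.2) ∧
    (∀ I ∈ S, ∀ J ∈ S, ivSet I ⊆ ivSet J ∨ ivSet J ⊆ ivSet I ∨ ivSet I ∩ ivSet J = ∅) ∧
    ∀ R ∈ S, (∑' Q : ↥(maxIn S R), len (Q : ℝ × ℝ)) ≤ ε * len R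

/-- `Σ_{I ∈ F} ⟨u⟩_I^q · ⟨v⟩_I · |I|`. -/
def sumTest (q : ℝ) (u v : ℝ → ℝ) (F : Set (ℝ × ℝ)) : ℝ :=
  ∑' I : ↥F, avg u (I : ℝ × ℝ) ^ q * avg v (I : ℝ × ℝ) * len (I : ℝ × ℝ)

/-! For `K ∈ 𝐊ᵢ`, the only interval `I(J')` meeting `K ∖ K^m` is `A = I(K^m)`, on which
`w_k = c := (3^k/(3^{k-1}+1))^{i+1}`. Hence on every `I ∈ 𝒮'` we have `w_k = c·1_A` and
`σ_k = c^{1-p}·1_A`, and both testing sums are a constant times `Σ_I ⟨1_A⟩_I^{q+1} |I|` with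
`q + 1 ≥ 2`. A sparse Carleson embedding bounds this by `4|L ∩ A|/(1-ε)`: the level set
`{I : ⟨1_A⟩_I > 2^{-n-1}}` has total length at most `2^{n+1}|L ∩ A|/(1-ε)`, because its maximal
members are disjoint and a sparse family packs, `(1-ε) Σ|I| ≤ |⋃ I|`, through the disjoint sets
`I ∖ ⋃ (maximal members strictly inside I)`; then sum `⟨1_A⟩_I^2 ≤ Σ_{⟨1_A⟩_I > 2^{-n-1}} 4^{-n}`
over `n`. Finally `c|L ∩ A| ≤ w_k(L)` and `c^{1-p}|L ∩ A| ≤ σ_k(L)`, so `C(p) = 4`. -/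

open scoped ENNReal

lemma len_mid (K : ℝ × ℝ) : len (mid K) = len K / 3 := by
  simp only [len, mid]; ring

lemma ivSet_mid_subset {K : ℝ × ℝ} (hK : 0 ≤ len K) : ivSet (mid K) ⊆ ivSet K := by
  simp only [ivSet, mid, len] at *
  exact Set.Ico_subset_Ico (by linarith) (by linarith)

lemma mid_injective : Function.Injective mid := by
  rintro ⟨a, b⟩ ⟨c, d⟩ h
  simp only [mid, Prod.mk.injEq] at h
  exact Prod.ext (by linarith [h.1, h.2]) (by linarith [h.1, h.2])

lemma measurableSet_ivSet (I : ℝ × ℝ) : MeasurableSet (ivSet I) := measurableSet_Ico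

lemma volume_ivSet_ne_top (I : ℝ × ℝ) : volume (ivSet I) ≠ ⊤ := by
  simp [ivSet]

lemma measureReal_ivSet {I : ℝ × ℝ} (hI : I.1 ≤ I.2) : volume.real (ivSet I) = len I :=
  Real.volume_real_Ico_of_le hI

lemma len_le_of_ivSet_subset {I J : ℝ × ℝ} (hI : I.1 < I.2) (h : ivSet I ⊆ ivSet J) :
    len I ≤ len J := by
  obtain ⟨h1, h2⟩ := (Set.Ico_subset_Ico_iff hI).1 h
  simp only [len]
  linarith

lemma measureReal_ivSet_inter_le {I : ℝ × ℝ} (hI : I.1 ≤ I.2) (A : Set ℝ) :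
    volume.real (ivSet I ∩ A) ≤ len I :=
  (measureReal_mono Set.inter_subset_left (volume_ivSet_ne_top I)).trans_eq
    (measureReal_ivSet hI)

lemma sq_le_sum_of_half_pow_lt {u : ℝ} (hu0 : 0 ≤ u) (hu1 : u ≤ 1) (N : ℕ)
    (hN : 0 < u → (1 / 2 : ℝ) ^ (N + 1) < u) :
    u ^ 2 ≤
      ∑ n ∈ Finset.range (N + 1), if (1 / 2 : ℝ) ^ (n + 1) < u then (1 / 4 : ℝ) ^ n else 0 := by
  have hnonneg : ∀ M, ∀ n ∈ Finset.range M,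
      0 ≤ if (1 / 2 : ℝ) ^ (n + 1) < u then (1 / 4 : ℝ) ^ n else 0 :=
    fun _ n _ => by split_ifs <;> positivity
  rcases hu0.eq_or_lt with rfl | hpos
  · rw [sq, zero_mul]
    exact Finset.sum_nonneg (hnonneg _)
  replace hN := hN hpos
  induction N with
  | zero =>
    simp only [zero_add, Finset.range_one, Finset.sum_singleton, pow_one] at hN ⊢
    rw [if_pos hN]
    nlinarith
  | succ N ih =>
    rw [Finset.sum_range_succ, if_pos hN]
    by_cases hN' : (1 / 2 : ℝ) ^ (N + 1) < u
    · linarith [ih hN', pow_pos (by norm_num : (0 : ℝ) < 1 / 4) (N + 1)]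
    · have : u ^ 2 ≤ (1 / 4 : ℝ) ^ (N + 1) := by
        rw [show (1 / 4 : ℝ) = (1 / 2) ^ 2 by norm_num, ← pow_mul, mul_comm, pow_mul]
        exact pow_le_pow_left₀ hu0 (not_lt.1 hN') 2
      linarith [Finset.sum_nonneg (hnonneg (N + 1))]

section NestedFamilies

variable {α : Type*}

lemma exists_pairwiseDisjoint_subfamily (𝒢 : Finset (Set α))
    (h𝒢 : ∀ s ∈ 𝒢, ∀ t ∈ 𝒢, s ⊆ t ∨ t ⊆ s ∨ Disjoint s t) :
    ∃ 𝒢' ⊆ 𝒢, (𝒢' : Set (Set α)).PairwiseDisjoint id ∧ ⋃ s ∈ 𝒢', s = ⋃ s ∈ 𝒢, s := by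
  classical
  refine ⟨𝒢.filter (Maximal (· ∈ 𝒢)), Finset.filter_subset _ _, ?_, ?_⟩
  · intro s hs t ht hst
    simp only [Finset.coe_filter] at hs ht
    rcases h𝒢 s hs.1 t ht.1 with h | h | h
    · exact absurd (le_antisymm h (hs.2.2 ht.1 h)) hst
    · exact absurd (le_antisymm (ht.2.2 hs.1 h) h) hst
    · exact h
  · refine subset_antisymm (Set.biUnion_mono (Finset.filter_subset _ _) fun _ _ => le_rfl) ?_
    refine Set.iUnion₂_subset fun s hs => ?_
    obtain ⟨t, hst, ht⟩ := 𝒢.exists_le_maximal hs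
    exact hst.trans (Set.subset_biUnion_of_mem (u := id) (Finset.mem_filter.2 ⟨ht.1, ht⟩))

variable [MeasurableSpace α] {μ : Measure α}

lemma mul_measureReal_biUnion_le {𝒢 : Finset (Set α)} {A L : Set α} {c : ℝ}
    (h𝒢 : ∀ s ∈ 𝒢, ∀ t ∈ 𝒢, s ⊆ t ∨ t ⊆ s ∨ Disjoint s t)
    (hmeas : ∀ s ∈ 𝒢, MeasurableSet s) (hA : MeasurableSet A) (hL : μ L ≠ ⊤)
    (hsub : ∀ s ∈ 𝒢, s ⊆ L) (hdense : ∀ s ∈ 𝒢, c * μ.real s ≤ μ.real (s ∩ A)) :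
    c * μ.real (⋃ s ∈ 𝒢, s) ≤ μ.real (L ∩ A) := by
  obtain ⟨𝒢', hsub', hdisj, hunion⟩ := exists_pairwiseDisjoint_subfamily 𝒢 h𝒢
  have hfin : ∀ s ∈ 𝒢', μ s ≠ ⊤ := fun s hs => measure_ne_top_of_subset (hsub s (hsub' hs)) hL
  have hdisjA : (𝒢' : Set (Set α)).PairwiseDisjoint (· ∩ A) :=
    hdisj.mono fun s => Set.inter_subset_left
  have hsum : μ.real (⋃ s ∈ 𝒢', s) = ∑ s ∈ 𝒢', μ.real s :=
    measureReal_biUnion_finset hdisj (fun s hs => hmeas s (hsub' hs)) hfin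
  rw [← hunion, hsum, Finset.mul_sum]
  calc ∑ s ∈ 𝒢', c * μ.real s ≤ ∑ s ∈ 𝒢', μ.real (s ∩ A) :=
        Finset.sum_le_sum fun s hs => hdense s (hsub' hs)
    _ = μ.real (⋃ s ∈ 𝒢', s ∩ A) :=
        (measureReal_biUnion_finset hdisjA (fun s hs => (hmeas s (hsub' hs)).inter hA)
          fun s hs => measure_ne_top_of_subset Set.inter_subset_left (hfin s hs)).symm
    _ ≤ μ.real (L ∩ A) :=
        measureReal_mono (Set.iUnion₂_subset fun s hs =>
          Set.inter_subset_inter_left A (hsub s (hsub' hs)))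
          (measure_ne_top_of_subset Set.inter_subset_left hL)

end NestedFamilies

def ownPart (S : Set (ℝ × ℝ)) (R : ℝ × ℝ) : Set ℝ := ivSet R \ ⋃ Q ∈ maxIn S R, ivSet Q

/-- Finiteness cannot be dropped: `MSparse` allows chains with no maximal member, such as
`[0, q)` for rational `q < 1/2` below `[0, 1)`. -/
lemma exists_maxIn_superset {S : Set (ℝ × ℝ)} {x R : ℝ × ℝ} (hx : x ∈ S)
    (hxR : ivSet x ⊂ ivSet R) (hfin : {y ∈ S | ivSet x ⊆ ivSet y}.Finite) :
    ∃ Q ∈ maxIn S R, ivSet x ⊆ ivSet Q := by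
  have hD : {y ∈ S | ivSet x ⊆ ivSet y ∧ ivSet y ⊂ ivSet R}.Finite :=
    hfin.subset fun y hy => ⟨hy.1, hy.2.1⟩
  obtain ⟨_, ⟨Q, hQ, rfl⟩, hmax⟩ :=
    (hD.image ivSet).exists_maximal ⟨ivSet x, x, ⟨hx, le_rfl, hxR⟩, rfl⟩
  refine ⟨Q, ⟨hQ.1, hQ.2.2, fun Q' hQ' hQQ' hQ'R => ?_⟩, hQ.2.1⟩
  exact le_antisymm (hmax ⟨Q', ⟨hQ', hQ.2.1.trans hQQ', hQ'R⟩, rfl⟩ hQQ') hQQ'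

namespace MSparse

variable {ε : ℝ} {S : Set (ℝ × ℝ)}

lemma len_pos (hS : MSparse ε S) {I : ℝ × ℝ} (hI : I ∈ S) : 0 < len I :=
  sub_pos.2 (hS.2.1 I hI)

lemma nested (hS : MSparse ε S) {I J : ℝ × ℝ} (hI : I ∈ S) (hJ : J ∈ S) :
    ivSet I ⊆ ivSet J ∨ ivSet J ⊆ ivSet I ∨ Disjoint (ivSet I) (ivSet J) := by
  simpa only [Set.disjoint_iff_inter_eq_empty] using hS.2.2.1 I hI J hJ

lemma eq_of_ivSet_eq (hS : MSparse ε S) {I J : ℝ × ℝ} (hI : I ∈ S)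
    (h : ivSet I = ivSet J) : I = J := by
  obtain ⟨h1, h2⟩ := (Set.Ico_eq_Ico_iff (Or.inl (hS.2.1 I hI))).1 h
  exact Prod.ext h1 h2

lemma of_lowerClosed (hS : MSparse ε S) {F : Set (ℝ × ℝ)} (hF : F ⊆ S)
    (hdown : ∀ Q ∈ S, ∀ R ∈ F, ivSet Q ⊆ ivSet R → Q ∈ F) : MSparse ε F := by
  have hmax : ∀ R ∈ F, maxIn F R = maxIn S R := by
    intro R hR
    ext Q
    refine ⟨fun hQ => ⟨hF hQ.1, hQ.2.1, fun Q' hQ' hQQ' hQ'R => ?_⟩,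
      fun hQ => ⟨hdown Q hQ.1 R hR hQ.2.1.subset, hQ.2.1, fun Q' hQ' => hQ.2.2 Q' (hF hQ')⟩⟩
    exact hQ.2.2 Q' (hdown Q' hQ' R hR hQ'R.subset) hQQ' hQ'R
  exact ⟨hS.1.mono hF, fun I hI => hS.2.1 I (hF hI),
    fun I hI J hJ => hS.2.2.1 I (hF hI) J (hF hJ), fun R hR => hmax R hR ▸ hS.2.2.2 R (hF hR)⟩

lemma pairwiseDisjoint_maxIn (hS : MSparse ε S) (R : ℝ × ℝ) :
    (maxIn S R).PairwiseDisjoint ivSet := by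
  intro Q hQ Q' hQ' hne
  rcases hS.nested hQ.1 hQ'.1 with h | h | h
  · exact absurd (hS.eq_of_ivSet_eq hQ.1 (hQ.2.2 Q' hQ'.1 h hQ'.2.1).symm) hne
  · exact absurd (hS.eq_of_ivSet_eq hQ.1 (hQ'.2.2 Q hQ.1 h hQ.2.1)) hne
  · exact h

lemma measurableSet_ownPart (hS : MSparse ε S) (R : ℝ × ℝ) : MeasurableSet (ownPart S R) :=
  measurableSet_Ico.diff <|
    MeasurableSet.biUnion (hS.1.mono fun _ hQ => hQ.1) fun _ _ => measurableSet_Ico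

lemma ofReal_le_volume_ownPart (hS : MSparse ε S) {R : ℝ × ℝ} (hR : R ∈ S) :
    ENNReal.ofReal ((1 - ε) * len R) ≤ volume (ownPart S R) := by
  set U := ⋃ Q ∈ maxIn S R, ivSet Q
  have hU : volume U = ∑' Q : maxIn S R, ENNReal.ofReal (len Q) := by
    rw [measure_biUnion (hS.1.mono fun _ hQ => hQ.1) (hS.pairwiseDisjoint_maxIn R)
      fun _ _ => measurableSet_Ico]
    exact tsum_congr fun Q => Real.volume_Ico
  have hUR : U ⊆ ivSet R := Set.iUnion₂_subset fun Q hQ => hQ.2.1.subset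
  have hsum : Summable fun Q : maxIn S R => len Q := by
    have := ENNReal.summable_toReal (hU ▸ measure_ne_top_of_subset hUR (volume_ivSet_ne_top R))
    convert this using 2 with Q
    exact (ENNReal.toReal_ofReal (hS.len_pos Q.2.1).le).symm
  have hsparse := hS.2.2.2 R hR
  have hε : 0 ≤ ε * len R :=
    (tsum_nonneg fun Q : maxIn S R => (hS.len_pos Q.2.1).le).trans hsparse
  calc ENNReal.ofReal ((1 - ε) * len R)
      = ENNReal.ofReal (len R) - ENNReal.ofReal (ε * len R) := by
        rw [← ENNReal.ofReal_sub _ hε]; ring_nf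
    _ ≤ volume (ivSet R) - volume U := by
        refine tsub_le_tsub Real.volume_Ico.ge ?_
        rw [hU, ← ENNReal.ofReal_tsum_of_nonneg (fun Q => (hS.len_pos Q.2.1).le) hsum]
        exact ENNReal.ofReal_le_ofReal hsparse
    _ ≤ volume (ownPart S R) := le_measure_sdiff

lemma disjoint_ivSet_ownPart {x R : ℝ × ℝ} (hx : x ∈ S) (hxR : ivSet x ⊂ ivSet R)
    (hfin : {y ∈ S | ivSet x ⊆ ivSet y}.Finite) : Disjoint (ivSet x) (ownPart S R) := by
  obtain ⟨Q, hQ, hxQ⟩ := exists_maxIn_superset hx hxR hfin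
  exact Set.disjoint_left.2 fun z hz hzR => hzR.2 (Set.mem_biUnion hQ (hxQ hz))

lemma disjoint_ownPart (hS : MSparse ε S) {x y : ℝ × ℝ} (hx : x ∈ S) (hy : y ∈ S) (hxy : x ≠ y)
    (hfx : {z ∈ S | ivSet x ⊆ ivSet z}.Finite) (hfy : {z ∈ S | ivSet y ⊆ ivSet z}.Finite) :
    Disjoint (ownPart S x) (ownPart S y) := by
  have hne : ivSet x ≠ ivSet y := fun h => hxy (hS.eq_of_ivSet_eq hx h)
  rcases hS.nested hx hy with h | h | h
  · exact (disjoint_ivSet_ownPart hx (h.ssubset_of_ne hne) hfx).mono_left Set.sdiff_subset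
  · exact (disjoint_ivSet_ownPart hy (h.ssubset_of_ne hne.symm) hfy).symm.mono_right
      Set.sdiff_subset
  · exact h.mono Set.sdiff_subset Set.sdiff_subset

lemma one_sub_mul_sum_len_le (hS : MSparse ε S) {G : Finset (ℝ × ℝ)} (hG : ↑G ⊆ S)
    (hfin : ∀ x ∈ G, {y ∈ S | ivSet x ⊆ ivSet y}.Finite) :
    (1 - ε) * ∑ x ∈ G, len x ≤ volume.real (⋃ x ∈ G, ivSet x) := by
  have hown : ∀ x ∈ G, volume (ownPart S x) ≠ ⊤ := fun x _ =>
    measure_ne_top_of_subset Set.sdiff_subset (volume_ivSet_ne_top x)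
  rw [Finset.mul_sum]
  calc ∑ x ∈ G, (1 - ε) * len x ≤ ∑ x ∈ G, volume.real (ownPart S x) :=
        Finset.sum_le_sum fun x hx =>
          (ENNReal.ofReal_le_iff_le_toReal (hown x hx)).1 (hS.ofReal_le_volume_ownPart (hG hx))
    _ = volume.real (⋃ x ∈ G, ownPart S x) :=
        (measureReal_biUnion_finset
          (fun x hx y hy hxy => hS.disjoint_ownPart (hG hx) (hG hy) hxy (hfin x hx) (hfin y hy))
          (fun x _ => hS.measurableSet_ownPart x) hown).symm
    _ ≤ volume.real (⋃ x ∈ G, ivSet x) :=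
        measureReal_mono (Set.biUnion_mono subset_rfl fun _ _ => Set.sdiff_subset)
          (measure_biUnion_lt_top G.finite_toSet fun x _ =>
            (volume_ivSet_ne_top x).lt_top).ne

lemma mul_sum_len_le (hS : MSparse ε S) {G : Finset (ℝ × ℝ)} (hG : ↑G ⊆ S)
    (hfin : ∀ x ∈ G, {y ∈ S | ivSet x ⊆ ivSet y}.Finite) {L : ℝ × ℝ}
    (hL : ∀ x ∈ G, ivSet x ⊆ ivSet L) {A : Set ℝ} (hA : MeasurableSet A) {c : ℝ} (hc : 0 ≤ c)
    (hdense : ∀ x ∈ G, c * len x ≤ volume.real (ivSet x ∩ A)) :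
    c * ((1 - ε) * ∑ x ∈ G, len x) ≤ volume.real (ivSet L ∩ A) := by
  classical
  calc c * ((1 - ε) * ∑ x ∈ G, len x) ≤ c * volume.real (⋃ s ∈ G.image ivSet, s) := by
        rw [Finset.set_biUnion_finset_image]
        exact mul_le_mul_of_nonneg_left (hS.one_sub_mul_sum_len_le hG hfin) hc
    _ ≤ volume.real (ivSet L ∩ A) := by
        refine mul_measureReal_biUnion_le ?_ ?_ hA (volume_ivSet_ne_top L) ?_ ?_
        · simp only [Finset.forall_mem_image]
          exact fun x hx y hy => hS.nested (hG hx) (hG hy)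
        · simp only [Finset.forall_mem_image]
          exact fun _ _ => measurableSet_Ico
        · simpa only [Finset.forall_mem_image] using hL
        · simp only [Finset.forall_mem_image]
          intro x hx
          rw [measureReal_ivSet (hS.2.1 x (hG hx)).le]
          exact hdense x hx

lemma sum_len_le_of_lt_avg (hS : MSparse ε S) (hε : ε < 1) {G : Finset (ℝ × ℝ)} (hG : ↑G ⊆ S)
    {L : ℝ × ℝ} (hL : ∀ x ∈ G, ivSet x ⊆ ivSet L) {A : Set ℝ} (hA : MeasurableSet A)
    (hfin : ∀ x ∈ G, 0 < volume.real (ivSet x ∩ A) → {y ∈ S | ivSet x ⊆ ivSet y}.Finite)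
    {c : ℝ} (hc : 0 < c) :
    ∑ x ∈ G with c < volume.real (ivSet x ∩ A) / len x, len x ≤
      volume.real (ivSet L ∩ A) / (c * (1 - ε)) := by
  have hdense : ∀ x ∈ G.filter fun x => c < volume.real (ivSet x ∩ A) / len x,
      c * len x ≤ volume.real (ivSet x ∩ A) := fun x hx =>
    have hx := Finset.mem_filter.1 hx
    ((lt_div_iff₀ (hS.len_pos (hG hx.1))).1 hx.2).le
  have hbound := hS.mul_sum_len_le ((Finset.coe_subset.2 (Finset.filter_subset _ G)).trans hG)
    (fun x hx => hfin x (Finset.mem_filter.1 hx).1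
      (lt_of_lt_of_le (mul_pos hc (hS.len_pos (hG (Finset.mem_filter.1 hx).1))) (hdense x hx)))
    (fun x hx => hL x (Finset.mem_filter.1 hx).1) hA hc.le hdense
  rw [le_div_iff₀ (mul_pos hc (sub_pos.2 hε))]
  linarith

lemma sum_sq_avg_le (hS : MSparse ε S) (hε : ε < 1) {G : Finset (ℝ × ℝ)} (hG : ↑G ⊆ S)
    {L : ℝ × ℝ} (hL : ∀ x ∈ G, ivSet x ⊆ ivSet L) {A : Set ℝ} (hA : MeasurableSet A)
    (hfin : ∀ x ∈ G, 0 < volume.real (ivSet x ∩ A) → {y ∈ S | ivSet x ⊆ ivSet y}.Finite) :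
    ∑ x ∈ G, (volume.real (ivSet x ∩ A) / len x) ^ 2 * len x ≤
      4 * volume.real (ivSet L ∩ A) / (1 - ε) := by
  set u : ℝ × ℝ → ℝ := fun x => volume.real (ivSet x ∩ A) / len x
  set B := volume.real (ivSet L ∩ A) / (1 - ε)
  have hB : 0 ≤ B := div_nonneg measureReal_nonneg (sub_pos.2 hε).le
  have hlen : ∀ x ∈ G, 0 < len x := fun x hx => hS.len_pos (hG hx)
  have hev : ∀ᶠ N : ℕ in Filter.atTop, ∀ x ∈ G, 0 < u x → (1 / 2 : ℝ) ^ (N + 1) < u x := by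
    refine (Filter.eventually_all_finset G).2 fun x _ => ?_
    by_cases hux : 0 < u x
    · have := (tendsto_pow_atTop_nhds_zero_of_lt_one (by norm_num : (0 : ℝ) ≤ 1 / 2)
        (by norm_num)).comp (Filter.tendsto_add_atTop_nat 1)
      exact (this.eventually (gt_mem_nhds hux)).mono fun N hN _ => hN
    · exact Filter.Eventually.of_forall fun N h => absurd h hux
  obtain ⟨N, hN⟩ := hev.exists
  show ∑ x ∈ G, u x ^ 2 * len x ≤ 4 * volume.real (ivSet L ∩ A) / (1 - ε)
  calc ∑ x ∈ G, u x ^ 2 * len x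
      ≤ ∑ x ∈ G, (∑ n ∈ Finset.range (N + 1),
          if (1 / 2 : ℝ) ^ (n + 1) < u x then (1 / 4 : ℝ) ^ n else 0) * len x :=
        Finset.sum_le_sum fun x hx => mul_le_mul_of_nonneg_right
          (sq_le_sum_of_half_pow_lt (div_nonneg measureReal_nonneg (hlen x hx).le)
            ((div_le_one (hlen x hx)).2 (measureReal_ivSet_inter_le (hS.2.1 x (hG hx)).le A))
            N (hN x hx)) (hlen x hx).le
    _ = ∑ n ∈ Finset.range (N + 1),
          (1 / 4 : ℝ) ^ n * ∑ x ∈ G with (1 / 2 : ℝ) ^ (n + 1) < u x, len x := by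
        simp only [Finset.sum_mul, ite_mul, zero_mul]
        rw [Finset.sum_comm]
        refine Finset.sum_congr rfl fun n _ => ?_
        rw [Finset.sum_filter, Finset.mul_sum]
        simp only [mul_ite, mul_zero]
    _ ≤ ∑ n ∈ Finset.range (N + 1),
          (1 / 4 : ℝ) ^ n * (volume.real (ivSet L ∩ A) / ((1 / 2) ^ (n + 1) * (1 - ε))) :=
        Finset.sum_le_sum fun n _ => mul_le_mul_of_nonneg_left
          (hS.sum_len_le_of_lt_avg hε hG hL hA hfin (by positivity)) (by positivity)
    _ = 2 * B * ∑ n ∈ Finset.range (N + 1), (1 / 2 : ℝ) ^ n := by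
        rw [Finset.mul_sum]
        refine Finset.sum_congr rfl fun n _ => ?_
        rw [show (1 / 4 : ℝ) ^ n = (1 / 2) ^ n * (1 / 2) ^ n by rw [← mul_pow]; norm_num]
        field_simp
        ring
    _ ≤ 2 * B * 2 := mul_le_mul_of_nonneg_left (sum_geometric_two_le _) (by positivity)
    _ = 4 * volume.real (ivSet L ∩ A) / (1 - ε) := by ring

lemma finite_upSet_of_summable (hS : MSparse ε S) {L : ℝ × ℝ}
    (hL : ∀ I ∈ S, ivSet I ⊆ ivSet L) {A : Set ℝ} {q : ℝ} (hq : 0 ≤ q)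
    (hsum : Summable fun I : S => (volume.real (ivSet I ∩ A) / len I) ^ q * len I)
    {x : ℝ × ℝ} (hx : x ∈ S) (hmx : 0 < volume.real (ivSet x ∩ A)) :
    {y ∈ S | ivSet x ⊆ ivSet y}.Finite := by
  set m : ℝ × ℝ → ℝ := fun x => volume.real (ivSet x ∩ A)
  have hLpos : 0 < len L :=
    (hS.len_pos hx).trans_le (len_le_of_ivSet_subset (hS.2.1 x hx) (hL x hx))
  set δ := (m x / len L) ^ q * m x
  have hδ : 0 < δ := by positivity
  have hfinδ : {y : S | δ ≤ (m y / len y) ^ q * len y}.Finite := by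
    simpa only [not_lt] using
      Filter.eventually_cofinite.1 (hsum.tendsto_cofinite_zero.eventually (gt_mem_nhds hδ))
  refine (hfinδ.image Subtype.val).subset ?_
  rintro y ⟨hy, hxy⟩
  refine ⟨⟨y, hy⟩, ?_, rfl⟩
  have hmxy : m x ≤ m y :=
    measureReal_mono (Set.inter_subset_inter_left A hxy)
      (measure_ne_top_of_subset Set.inter_subset_left (volume_ivSet_ne_top y))
  have hly := hS.len_pos hy
  have hmy : m y ≤ len y := measureReal_ivSet_inter_le (hS.2.1 y hy).le A
  have hyL : len y ≤ len L := len_le_of_ivSet_subset (hS.2.1 y hy) (hL y hy)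
  calc δ ≤ (m y / len y) ^ q * m x :=
        mul_le_mul_of_nonneg_right (Real.rpow_le_rpow (by positivity)
          (div_le_div₀ (hmx.trans_le hmxy).le hmxy hly hyL) hq) hmx.le
    _ ≤ (m y / len y) ^ q * len y :=
        mul_le_mul_of_nonneg_left (hmxy.trans hmy) (by positivity)

theorem tsum_rpow_avg_le (hS : MSparse ε S) (hε : ε < 1) {L : ℝ × ℝ}
    (hL : ∀ I ∈ S, ivSet I ⊆ ivSet L) {A : Set ℝ} (hA : MeasurableSet A) {q : ℝ} (hq : 2 ≤ q) :
    ∑' I : S, (volume.real (ivSet I ∩ A) / len I) ^ q * len I ≤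
      4 * volume.real (ivSet L ∩ A) / (1 - ε) := by
  -- Without summability the `tsum` is `0`; with it, chains above an interval are finite.
  by_cases hsum : Summable fun I : S => (volume.real (ivSet I ∩ A) / len I) ^ q * len I
  · refine hsum.tsum_le_of_sum_le fun G => ?_
    refine (Finset.sum_map G (Function.Embedding.subtype (· ∈ S))
      (fun I => (volume.real (ivSet I ∩ A) / len I) ^ q * len I)).symm.trans_le ?_
    have hG : ↑(G.map (Function.Embedding.subtype (· ∈ S))) ⊆ S := by
      intro x hx
      obtain ⟨y, -, rfl⟩ := Finset.mem_map.1 hx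
      exact y.2
    refine (Finset.sum_le_sum fun x hx => mul_le_mul_of_nonneg_right ?_
      (hS.len_pos (hG hx)).le).trans (hS.sum_sq_avg_le hε hG (fun x hx => hL x (hG hx)) hA
        fun x hx => hS.finite_upSet_of_summable hL (by linarith) hsum (hG hx))
    have hlen := hS.len_pos (hG hx)
    rw [← Real.rpow_two]
    exact Real.rpow_le_rpow_of_exponent_ge' (div_nonneg measureReal_nonneg hlen.le)
      ((div_le_one hlen).2 (measureReal_ivSet_inter_le (hS.2.1 x (hG hx)).le A)) zero_le_two hq
  · rw [tsum_eq_zero_of_not_summable hsum]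
    exact div_nonneg (by positivity) (by linarith)

end MSparse

section Construction

def gridCell (k : ℕ) (J : ℝ × ℝ) (j : ℕ) : ℝ × ℝ :=
  (J.1 + (j : ℝ) * ((3 : ℝ) ^ (1 - (k : ℤ)) * len J),
    J.1 + ((j : ℝ) + 1) * ((3 : ℝ) ^ (1 - (k : ℤ)) * len J))

variable {k : ℕ}

lemma mem_Kfam_succ {i : ℕ} {K : ℝ × ℝ} :
    K ∈ Kfam k (i + 1) ↔ ∃ P ∈ Kfam k i, ∃ j < 3 ^ (k - 1), K = gridCell k (mid P) j :=
  Iff.rfl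

lemma ivSet_gridCell_subset (hk : 1 ≤ k) {J : ℝ × ℝ} (hJ : 0 ≤ len J) {j : ℕ}
    (hj : j < 3 ^ (k - 1)) : ivSet (gridCell k J j) ⊆ ivSet J := by
  have hstep : (3 : ℝ) ^ (k - 1) * (3 : ℝ) ^ (1 - (k : ℤ)) = 1 := by
    rw [← zpow_natCast, ← zpow_add₀ three_ne_zero]
    simp [Nat.cast_sub hk]
  have hj' : (j : ℝ) + 1 ≤ (3 : ℝ) ^ (k - 1) := by exact_mod_cast hj
  have hcell : ((j : ℝ) + 1) * ((3 : ℝ) ^ (1 - (k : ℤ)) * len J) ≤ len J := by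
    calc ((j : ℝ) + 1) * ((3 : ℝ) ^ (1 - (k : ℤ)) * len J)
        ≤ (3 : ℝ) ^ (k - 1) * ((3 : ℝ) ^ (1 - (k : ℤ)) * len J) := by gcongr
      _ = len J := by rw [← mul_assoc, hstep, one_mul]
  have hstart : 0 ≤ (j : ℝ) * ((3 : ℝ) ^ (1 - (k : ℤ)) * len J) :=
    mul_nonneg j.cast_nonneg (mul_nonneg (zpow_nonneg (by norm_num) _) hJ)
  simp only [ivSet, gridCell, len] at hcell hstart ⊢
  exact Set.Ico_subset_Ico (le_add_of_nonneg_right hstart) (by linarith)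

lemma disjoint_gridCell {J : ℝ × ℝ} (hJ : 0 ≤ len J) {j j' : ℕ} (hjj' : j < j') :
    Disjoint (ivSet (gridCell k J j)) (ivSet (gridCell k J j')) := by
  have hj : (j : ℝ) + 1 ≤ j' := by exact_mod_cast hjj'
  simp only [ivSet, gridCell, Set.Ico_disjoint_Ico]
  have : 0 ≤ (3 : ℝ) ^ (1 - (k : ℤ)) * len J := by positivity
  exact (min_le_left _ _).trans (le_max_of_le_right (by nlinarith))

lemma Kfam_len_pos {i : ℕ} {K : ℝ × ℝ} (hK : K ∈ Kfam k i) : 0 < len K := by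
  induction i generalizing K with
  | zero => simp only [Kfam, Set.mem_singleton_iff] at hK; subst hK; norm_num [len]
  | succ n ih =>
    obtain ⟨P, hP, j, -, rfl⟩ := hK
    have : 0 < len (mid P) := by rw [len_mid]; linarith [ih hP]
    simp only [len] at this ⊢
    nlinarith [zpow_pos (by norm_num : (0 : ℝ) < 3) (1 - (k : ℤ))]

lemma exists_Kfam_subset_mid (hk : 1 ≤ k) {i : ℕ} {K : ℝ × ℝ} (hK : K ∈ Kfam k (i + 1)) :
    ∃ P ∈ Kfam k i, ivSet K ⊆ ivSet (mid P) := by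
  obtain ⟨P, hP, j, hj, rfl⟩ := mem_Kfam_succ.1 hK
  refine ⟨P, hP, ivSet_gridCell_subset hk ?_ hj⟩
  rw [len_mid]; linarith [Kfam_len_pos hP]

lemma Kfam_eq_or_disjoint (hk : 1 ≤ k) {i : ℕ} {K₁ K₂ : ℝ × ℝ} (h₁ : K₁ ∈ Kfam k i)
    (h₂ : K₂ ∈ Kfam k i) : K₁ = K₂ ∨ Disjoint (ivSet K₁) (ivSet K₂) := by
  induction i generalizing K₁ K₂ with
  | zero => simp only [Kfam, Set.mem_singleton_iff] at h₁ h₂; exact Or.inl (h₁.trans h₂.symm)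
  | succ n ih =>
    obtain ⟨P₁, hP₁, j₁, hj₁, rfl⟩ := mem_Kfam_succ.1 h₁
    obtain ⟨P₂, hP₂, j₂, hj₂, rfl⟩ := mem_Kfam_succ.1 h₂
    have hm : ∀ {P}, P ∈ Kfam k n → 0 ≤ len (mid P) := fun hP => by
      rw [len_mid]; linarith [Kfam_len_pos hP]
    have hcell : ∀ {P j}, P ∈ Kfam k n → j < 3 ^ (k - 1) →
        ivSet (gridCell k (mid P) j) ⊆ ivSet P := fun hP hj =>
      (ivSet_gridCell_subset hk (hm hP) hj).trans (ivSet_mid_subset (Kfam_len_pos hP).le)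
    rcases ih hP₁ hP₂ with rfl | hdisj
    · rcases lt_trichotomy j₁ j₂ with h | rfl | h
      · exact Or.inr (disjoint_gridCell (hm hP₁) h)
      · exact Or.inl rfl
      · exact Or.inr (disjoint_gridCell (hm hP₁) h).symm
    · exact Or.inr (hdisj.mono (hcell hP₁ hj₁) (hcell hP₂ hj₂))

lemma Kfam_subset_mid_or_disjoint (hk : 1 ≤ k) {i m : ℕ} (him : i < m) {K K' : ℝ × ℝ}
    (hK : K ∈ Kfam k i) (hK' : K' ∈ Kfam k m) :
    ivSet K' ⊆ ivSet (mid K) ∨ Disjoint (ivSet K') (ivSet K) := by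
  induction m generalizing K' with
  | zero => omega
  | succ n ih =>
    obtain ⟨P, hP, hK'P⟩ := exists_Kfam_subset_mid hk hK'
    have hK'P' := hK'P.trans (ivSet_mid_subset (Kfam_len_pos hP).le)
    rcases (Nat.lt_succ_iff.1 him).lt_or_eq with hin | rfl
    · exact (ih hin hP).imp hK'P'.trans fun h => h.mono_left hK'P'
    · rcases Kfam_eq_or_disjoint hk hP hK with rfl | h
      · exact Or.inl hK'P
      · exact Or.inr (h.mono_left hK'P')

lemma Kfam_finite (k i : ℕ) : (Kfam k i).Finite := by
  induction i with
  | zero => exact Set.finite_singleton _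
  | succ n ih =>
    refine (ih.biUnion fun P _ =>
      (Set.finite_Iio (3 ^ (k - 1))).image (gridCell k (mid P))).subset ?_
    rintro K ⟨P, hP, j, hj, rfl⟩
    exact Set.mem_biUnion hP ⟨j, hj, rfl⟩

lemma Jfam_succ_eq_image (k i : ℕ) : Jfam k (i + 1) = mid '' Kfam k i := by
  ext J
  simp only [Jfam, Nat.add_sub_cancel, Set.mem_image, eq_comm]
  rfl

end Construction

section Weight

variable {k : ℕ} {ch : ℝ × ℝ → Bool}

lemma disjoint_IJ (k : ℕ) (ch : ℝ × ℝ → Bool) (J : ℝ × ℝ) :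
    Disjoint (ivSet (IJ k ch J)) (ivSet J) := by
  unfold IJ
  split_ifs
  · exact Set.Ico_disjoint_Ico_same.symm
  · exact Set.Ico_disjoint_Ico_same

lemma ivSet_IJ_mid_subset (hk : 1 ≤ k) {K : ℝ × ℝ} (hK : 0 ≤ len K) :
    ivSet (IJ k ch (mid K)) ⊆ ivSet K := by
  have h3 : (3 : ℝ) ^ (1 - (k : ℤ)) ≤ 1 := zpow_le_one_of_nonpos₀ (by norm_num) (by omega)
  have hmid : (3 : ℝ) ^ (1 - (k : ℤ)) * len (mid K) ≤ len K / 3 := by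
    rw [len_mid]; nlinarith [zpow_pos (by norm_num : (0 : ℝ) < 3) (1 - (k : ℤ))]
  have hnn : 0 ≤ (3 : ℝ) ^ (1 - (k : ℤ)) * len (mid K) := by
    rw [len_mid]; positivity
  unfold IJ
  split_ifs <;> simp only [ivSet, mid, len] at hK hmid hnn ⊢ <;>
    exact Set.Ico_subset_Ico (by linarith) (by linarith)

lemma volume_IJ_mid (k : ℕ) (ch : ℝ × ℝ → Bool) (K : ℝ × ℝ) :
    volume (ivSet (IJ k ch (mid K))) = ((3 : ℝ≥0∞) ^ k)⁻¹ * volume (ivSet K) := by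
  have h : (3 : ℝ) ^ (1 - (k : ℤ)) * len (mid K) = ((3 : ℝ) ^ k)⁻¹ * len K := by
    rw [len_mid, zpow_sub₀ three_ne_zero, zpow_one, zpow_natCast]
    field_simp
  have h3 : ((3 : ℝ≥0∞) ^ k)⁻¹ = ENNReal.ofReal ((3 ^ k)⁻¹) := by
    rw [ENNReal.ofReal_inv_of_pos (by positivity)]
    norm_num
  rw [show volume (ivSet K) = ENNReal.ofReal (len K) from Real.volume_Ico, h3,
    ← ENNReal.ofReal_mul (by positivity), ← h]
  unfold IJ
  split_ifs <;> simp only [ivSet, Real.volume_Ico] <;> congr 1 <;> ring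

lemma eq_of_mem_IJ_mid (hk : 1 ≤ k) {i m : ℕ} {K K' : ℝ × ℝ} (hK : K ∈ Kfam k i)
    (hK' : K' ∈ Kfam k m) {x : ℝ} (hx : x ∈ ivSet K) (hx' : x ∉ ivSet (mid K))
    (hxK' : x ∈ ivSet (IJ k ch (mid K'))) : m = i ∧ K' = K := by
  have hxK'' : x ∈ ivSet K' := ivSet_IJ_mid_subset hk (Kfam_len_pos hK').le hxK'
  have hxm : x ∉ ivSet (mid K') := Set.disjoint_left.1 (disjoint_IJ k ch _) hxK'
  rcases lt_trichotomy m i with h | rfl | h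
  · rcases Kfam_subset_mid_or_disjoint hk h hK' hK with hsub | hdisj
    · exact absurd (hsub hx) hxm
    · exact absurd hxK'' (Set.disjoint_left.1 hdisj hx)
  · rcases Kfam_eq_or_disjoint hk hK' hK with rfl | hdisj
    · exact ⟨rfl, rfl⟩
    · exact absurd hx (Set.disjoint_left.1 hdisj hxK'')
  · rcases Kfam_subset_mid_or_disjoint hk h hK hK' with hsub | hdisj
    · exact absurd (hsub hxK'') hx'
    · exact absurd hx (Set.disjoint_left.1 hdisj hxK'')

/-- The series defining `wgt`, with arbitrary coefficients; its `ℝ≥0∞`-valued instance computes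
`∫⁻ w_k`. -/
def layerSum {M : Type*} [AddCommMonoid M] [TopologicalSpace M] (k : ℕ) (ch : ℝ × ℝ → Bool)
    (c : ℕ → M) (x : ℝ) : M :=
  ∑' i : ℕ, ∑' J : ↥(Jfam k (i + 1)), Set.indicator (ivSet (IJ k ch (J : ℝ × ℝ))) (fun _ => c i) x

def coefw (k i : ℕ) : ℝ := ((3 : ℝ) ^ k / ((3 : ℝ) ^ (k - 1) + 1)) ^ (i + 1)

lemma wgt_eq_layerSum : wgt k ch = layerSum k ch (coefw k) := rfl

section LayerSum

variable {M : Type*} [AddCommMonoid M] [TopologicalSpace M] {c : ℕ → M} {x : ℝ}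

lemma layerSum_eq_of_mem (hk : 1 ≤ k) {i : ℕ} {K : ℝ × ℝ} (hK : K ∈ Kfam k i)
    (hx : x ∈ ivSet (IJ k ch (mid K))) : layerSum k ch c x = c i := by
  have hxK := ivSet_IJ_mid_subset hk (Kfam_len_pos hK).le hx
  have hxm : x ∉ ivSet (mid K) := Set.disjoint_left.1 (disjoint_IJ k ch _) hx
  have hunique : ∀ (m : ℕ) (J : ↥(Jfam k (m + 1))), x ∈ ivSet (IJ k ch J) →
      m = i ∧ (J : ℝ × ℝ) = mid K := by
    rintro m ⟨J, hJ⟩ hxJ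
    rw [Jfam_succ_eq_image] at hJ
    obtain ⟨K', hK', rfl⟩ := hJ
    obtain ⟨rfl, rfl⟩ := eq_of_mem_IJ_mid hk hK hK' hxK hxm hxJ
    exact ⟨rfl, rfl⟩
  have hKJ : mid K ∈ Jfam k (i + 1) := by rw [Jfam_succ_eq_image]; exact ⟨K, hK, rfl⟩
  unfold layerSum
  rw [tsum_eq_single i, tsum_eq_single ⟨mid K, hKJ⟩, Set.indicator_of_mem hx]
  · exact fun J hJ => Set.indicator_of_notMem (fun hxJ => hJ (Subtype.ext (hunique i J hxJ).2)) _
  · intro m hm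
    rw [tsum_congr fun J => Set.indicator_of_notMem (fun hxJ => hm (hunique m J hxJ).1) _,
      tsum_zero]

lemma layerSum_eq_zero (hx : ∀ i, ∀ K ∈ Kfam k i, x ∉ ivSet (IJ k ch (mid K))) :
    layerSum k ch c x = 0 := by
  refine (tsum_congr fun i => (tsum_congr fun J => Set.indicator_of_notMem ?_ _).trans
    tsum_zero).trans tsum_zero
  obtain ⟨J, hJ⟩ := J
  rw [Jfam_succ_eq_image] at hJ
  obtain ⟨K, hK, rfl⟩ := hJ
  exact hx i K hK

lemma layerSum_eq_zero_or (hk : 1 ≤ k) (c : ℕ → M) (x : ℝ) :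
    layerSum k ch c x = 0 ∨ ∃ i, layerSum k ch c x = c i := by
  by_cases h : ∃ i, ∃ K ∈ Kfam k i, x ∈ ivSet (IJ k ch (mid K))
  · obtain ⟨i, K, hK, hx⟩ := h
    exact Or.inr ⟨i, layerSum_eq_of_mem hk hK hx⟩
  · push Not at h
    exact Or.inl (layerSum_eq_zero h)

lemma map_layerSum (hk : 1 ≤ k) {N : Type*} [AddCommMonoid N] [TopologicalSpace N] {g : M → N}
    (hg : g 0 = 0) (c : ℕ → M) (x : ℝ) : g (layerSum k ch c x) = layerSum k ch (g ∘ c) x := by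
  by_cases h : ∃ i, ∃ K ∈ Kfam k i, x ∈ ivSet (IJ k ch (mid K))
  · obtain ⟨i, K, hK, hx⟩ := h
    rw [layerSum_eq_of_mem hk hK hx, layerSum_eq_of_mem hk hK hx, Function.comp_apply]
  · push Not at h
    rw [layerSum_eq_zero h, layerSum_eq_zero h, hg]

end LayerSum

end Weight

section WeightBounds

variable {k : ℕ} {ch : ℝ × ℝ → Bool}

lemma one_le_coefw (hk : 1 ≤ k) (i : ℕ) : 1 ≤ coefw k i := by
  have h : (3 : ℝ) ^ k = 3 * 3 ^ (k - 1) := by rw [← pow_succ']; congr 1; omega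
  refine one_le_pow₀ ((one_le_div (by positivity)).2 ?_)
  rw [h]
  linarith [one_le_pow₀ (by norm_num : (1 : ℝ) ≤ 3) (n := k - 1)]

lemma coefw_div_le (hk : 1 ≤ k) (i : ℕ) :
    coefw k i / (3 ^ k * 3 ^ i) ≤ ((3 : ℝ) ^ (k - 1) / (3 ^ (k - 1) + 1)) ^ i := by
  set a : ℝ := 3 ^ (k - 1)
  have ha : 1 ≤ a := one_le_pow₀ (by norm_num)
  have h3 : (3 : ℝ) ^ k = 3 * a := by rw [← pow_succ']; congr 1; omega
  have hr : a / (a + 1) ≤ 1 := (div_le_one (by positivity)).2 (by linarith)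
  have hc : coefw k i = (3 * a / (a + 1)) ^ (i + 1) := by rw [coefw, h3]
  calc coefw k i / (3 ^ k * 3 ^ i) = (a / (a + 1)) ^ i * (a / (a + 1) / a) := by
        have : a + 1 ≠ 0 := by positivity
        rw [hc, h3, mul_div_assoc, mul_pow, pow_succ, div_pow, div_pow]
        field_simp
        ring
    _ ≤ (a / (a + 1)) ^ i * 1 := by
        gcongr
        exact (div_le_one (by positivity)).2 (hr.trans ha)
    _ = (a / (a + 1)) ^ i := mul_one _

lemma wgt_nonneg (k : ℕ) (ch : ℝ × ℝ → Bool) (x : ℝ) : 0 ≤ wgt k ch x :=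
  tsum_nonneg fun _ => tsum_nonneg fun _ => Set.indicator_nonneg (fun _ _ => by positivity) _

lemma wgt_eq_coefw_of_mem (hk : 1 ≤ k) {i : ℕ} {K : ℝ × ℝ} (hK : K ∈ Kfam k i) {x : ℝ}
    (hx : x ∈ ivSet (IJ k ch (mid K))) : wgt k ch x = coefw k i :=
  layerSum_eq_of_mem hk hK hx

lemma wgt_eq_indicator (hk : 1 ≤ k) {i : ℕ} {K : ℝ × ℝ} (hK : K ∈ Kfam k i) {x : ℝ}
    (hx : x ∈ ivSet K) (hx' : x ∉ ivSet (mid K)) :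
    wgt k ch x = (ivSet (IJ k ch (mid K))).indicator (fun _ => coefw k i) x := by
  by_cases hxA : x ∈ ivSet (IJ k ch (mid K))
  · rw [Set.indicator_of_mem hxA, wgt_eq_coefw_of_mem hk hK hxA]
  · rw [Set.indicator_of_notMem hxA]
    refine layerSum_eq_zero fun m K' hK' hxK' => ?_
    obtain ⟨rfl, rfl⟩ := eq_of_mem_IJ_mid hk hK hK' hx hx' hxK'
    exact hxA hxK'

lemma one_le_wgt_of_pos (hk : 1 ≤ k) {x : ℝ} (hx : 0 < wgt k ch x) : 1 ≤ wgt k ch x := by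
  rw [wgt_eq_layerSum] at hx ⊢
  rcases layerSum_eq_zero_or (ch := ch) hk (coefw k) x with h | ⟨i, h⟩
  · exact absurd (h ▸ hx) (lt_irrefl 0)
  · exact h ▸ one_le_coefw hk i

lemma ofReal_wgt (hk : 1 ≤ k) (x : ℝ) :
    ENNReal.ofReal (wgt k ch x) = layerSum k ch (ENNReal.ofReal ∘ coefw k) x :=
  map_layerSum hk ENNReal.ofReal_zero (coefw k) x

lemma measurable_layerSum (c : ℕ → ℝ≥0∞) : Measurable (layerSum k ch c) := by
  have : ∀ i, Countable (Jfam k (i + 1)) := fun i => by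
    rw [Jfam_succ_eq_image]
    exact ((Kfam_finite k i).image mid).countable.to_subtype
  exact Measurable.tsum fun i => Measurable.tsum fun _ =>
    measurable_const.indicator (measurableSet_ivSet _)

lemma measurable_wgt (hk : 1 ≤ k) : Measurable (wgt k ch) := by
  have : wgt k ch = fun x => (layerSum k ch (ENNReal.ofReal ∘ coefw k) x).toReal :=
    funext fun x => by rw [← ofReal_wgt hk, ENNReal.toReal_ofReal (wgt_nonneg k ch x)]
  rw [this]
  exact (measurable_layerSum _).ennreal_toReal

lemma volume_mid (K : ℝ × ℝ) : volume (ivSet (mid K)) = 3⁻¹ * volume (ivSet K) := by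
  simp only [ivSet, Real.volume_Ico]
  rw [← ENNReal.ofReal_ofNat 3, ← ENNReal.ofReal_inv_of_pos (by norm_num),
    ← ENNReal.ofReal_mul (by norm_num)]
  congr 1
  simp only [mid]
  ring

lemma tsum_volume_Kfam_le (hk : 1 ≤ k) (i : ℕ) :
    ∑' K : Kfam k i, volume (ivSet K) ≤ 3⁻¹ ^ i := by
  have hunion : ∀ i, ∑' K : Kfam k i, volume (ivSet K) = volume (⋃ K ∈ Kfam k i, ivSet K) :=
    fun i => (measure_biUnion (Kfam_finite k i).countable
      (fun K₁ h₁ K₂ h₂ hne => (Kfam_eq_or_disjoint hk h₁ h₂).resolve_left hne)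
      fun _ _ => (measurableSet_ivSet _)).symm
  induction i with
  | zero => simp [Kfam, ivSet]
  | succ n ih =>
    have hsub : ⋃ K ∈ Kfam k (n + 1), ivSet K ⊆ ⋃ P ∈ Kfam k n, ivSet (mid P) :=
      Set.iUnion₂_subset fun K hK =>
        let ⟨P, hP, hKP⟩ := exists_Kfam_subset_mid hk hK
        hKP.trans (Set.subset_biUnion_of_mem (u := fun P => ivSet (mid P)) hP)
    calc ∑' K : Kfam k (n + 1), volume (ivSet K)
        ≤ volume (⋃ P ∈ Kfam k n, ivSet (mid P)) := hunion (n + 1) ▸ measure_mono hsub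
      _ ≤ ∑' P : Kfam k n, volume (ivSet (mid P)) :=
          measure_biUnion_le _ (Kfam_finite k n).countable _
      _ = 3⁻¹ * ∑' P : Kfam k n, volume (ivSet P) := by
          simp only [volume_mid, ENNReal.tsum_mul_left]
      _ ≤ 3⁻¹ ^ (n + 1) := by
          rw [pow_succ']
          exact mul_le_mul_right ih _

lemma lintegral_layerSum (c : ℕ → ℝ≥0∞) :
    ∫⁻ x, layerSum k ch c x = ∑' i, c i * ∑' K : Kfam k i, volume (ivSet (IJ k ch (mid K))) := by
  have hJ : ∀ i, Countable (Jfam k (i + 1)) := fun i => by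
    rw [Jfam_succ_eq_image]
    exact ((Kfam_finite k i).image mid).countable.to_subtype
  unfold layerSum
  rw [lintegral_tsum fun i => (Measurable.tsum fun _ =>
    measurable_const.indicator (measurableSet_ivSet _)).aemeasurable]
  refine tsum_congr fun i => ?_
  rw [lintegral_tsum fun _ => (measurable_const.indicator (measurableSet_ivSet _)).aemeasurable,
    ← ENNReal.tsum_mul_left]
  simp only [lintegral_indicator_const (measurableSet_ivSet _)]
  rw [Jfam_succ_eq_image]
  exact (Equiv.tsum_eq (Equiv.Set.image mid (Kfam k i) mid_injective)
    fun J : ↥(mid '' Kfam k i) => c i * volume (ivSet (IJ k ch J))).symm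

lemma lintegral_ofReal_wgt_lt_top (hk : 1 ≤ k) : ∫⁻ x, ENNReal.ofReal (wgt k ch x) < ⊤ := by
  set r : ℝ := 3 ^ (k - 1) / (3 ^ (k - 1) + 1)
  have hr : r < 1 := (div_lt_one (by positivity)).2 (by linarith)
  have hterm : ∀ i, ENNReal.ofReal (coefw k i) *
      ∑' K : Kfam k i, volume (ivSet (IJ k ch (mid K))) ≤ ENNReal.ofReal r ^ i := by
    intro i
    simp only [volume_IJ_mid, ENNReal.tsum_mul_left]
    calc ENNReal.ofReal (coefw k i) * (((3 : ℝ≥0∞) ^ k)⁻¹ * ∑' K : Kfam k i, volume (ivSet K))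
        ≤ ENNReal.ofReal (coefw k i) * ((3 : ℝ≥0∞) ^ k)⁻¹ * 3⁻¹ ^ i := by
          rw [mul_assoc]
          exact mul_le_mul_right (mul_le_mul_right (tsum_volume_Kfam_le hk i) _) _
      _ = ENNReal.ofReal (coefw k i / (3 ^ k * 3 ^ i)) := by
          rw [ENNReal.ofReal_div_of_pos (by positivity), ENNReal.ofReal_mul (by positivity),
            ENNReal.ofReal_pow (by norm_num), ENNReal.ofReal_pow (by norm_num),
            ENNReal.ofReal_ofNat, div_eq_mul_inv, ENNReal.mul_inv (by simp) (by simp),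
            ENNReal.inv_pow, ENNReal.inv_pow, mul_assoc]
      _ ≤ ENNReal.ofReal r ^ i := by
          rw [← ENNReal.ofReal_pow (by positivity)]
          exact ENNReal.ofReal_le_ofReal (coefw_div_le hk i)
  simp only [ofReal_wgt hk, lintegral_layerSum, Function.comp_apply]
  calc ∑' i, ENNReal.ofReal (coefw k i) * ∑' K : Kfam k i, volume (ivSet (IJ k ch (mid K)))
      ≤ ∑' i, ENNReal.ofReal r ^ i := ENNReal.tsum_le_tsum hterm
    _ < ⊤ := by
        rw [ENNReal.tsum_geometric, ENNReal.inv_lt_top, tsub_pos_iff_lt]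
        exact ENNReal.ofReal_lt_one.2 hr

lemma integrable_wgt (hk : 1 ≤ k) : Integrable (wgt k ch) :=
  ⟨(measurable_wgt hk).aestronglyMeasurable,
    (hasFiniteIntegral_iff_ofReal (ae_of_all _ (wgt_nonneg k ch))).2
      (lintegral_ofReal_wgt_lt_top hk)⟩

lemma sgm_nonneg (p : ℝ) (k : ℕ) (ch : ℝ × ℝ → Bool) (x : ℝ) : 0 ≤ sgm p k ch x := by
  unfold sgm
  split_ifs
  · exact Real.rpow_nonneg (wgt_nonneg k ch x) _
  · exact le_rfl

lemma sgm_le_one (hk : 1 ≤ k) {p : ℝ} (hp : 1 ≤ p) (x : ℝ) : sgm p k ch x ≤ 1 := by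
  unfold sgm
  split_ifs with h
  · exact Real.rpow_le_one_of_one_le_of_nonpos (one_le_wgt_of_pos hk h) (by linarith)
  · exact zero_le_one

lemma integrableOn_sgm (hk : 1 ≤ k) {p : ℝ} (hp : 1 ≤ p) {s : Set ℝ} (hs : volume s ≠ ⊤) :
    IntegrableOn (sgm p k ch) s := by
  have hmeas : Measurable (sgm p k ch) :=
    Measurable.ite (measurableSet_lt measurable_const (measurable_wgt hk))
      ((measurable_wgt hk).pow_const _) measurable_const
  refine Integrable.mono' (integrableOn_const (C := (1 : ℝ)) hs) hmeas.aestronglyMeasurable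
    (ae_of_all _ fun x => ?_)
  rw [Real.norm_eq_abs, abs_of_nonneg (sgm_nonneg p k ch x)]
  exact sgm_le_one hk hp x

end WeightBounds

section Testing

variable {ε : ℝ} {F : Set (ℝ × ℝ)} {A : Set ℝ} {u v : ℝ → ℝ} {a b : ℝ}

lemma mass_eq_of_eqOn_indicator {I : ℝ × ℝ} (hA : MeasurableSet A)
    (hu : ∀ x ∈ ivSet I, u x = A.indicator (fun _ => a) x) :
    mass u I = a * volume.real (ivSet I ∩ A) := by
  rw [mass, setIntegral_congr_fun (measurableSet_ivSet I) hu, setIntegral_indicator hA,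
    setIntegral_const, smul_eq_mul, mul_comm]

lemma mul_measureReal_le_mass {L : ℝ × ℝ} (hA : MeasurableSet A) (hu : IntegrableOn u (ivSet L))
    (hu0 : ∀ x ∈ ivSet L, 0 ≤ u x) (ha : ∀ x ∈ ivSet L ∩ A, a ≤ u x) :
    a * volume.real (ivSet L ∩ A) ≤ mass u L := by
  calc a * volume.real (ivSet L ∩ A) = ∫ x in ivSet L, A.indicator (fun _ => a) x := by
        rw [setIntegral_indicator hA, setIntegral_const, smul_eq_mul, mul_comm]
    _ ≤ mass u L := by
        refine setIntegral_mono_on ((integrableOn_const (volume_ivSet_ne_top L)).indicator hA)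
          hu (measurableSet_ivSet L) fun x hx => ?_
        by_cases hxA : x ∈ A
        · rw [Set.indicator_of_mem hxA]
          exact ha x ⟨hx, hxA⟩
        · rw [Set.indicator_of_notMem hxA]
          exact hu0 x hx

lemma sumTest_eq_of_eqOn_indicator {q : ℝ} (hq : 0 ≤ q) (hF : ∀ I ∈ F, 0 < len I)
    (hA : MeasurableSet A) (ha : 0 ≤ a)
    (hu : ∀ I ∈ F, ∀ x ∈ ivSet I, u x = A.indicator (fun _ => a) x)
    (hv : ∀ I ∈ F, ∀ x ∈ ivSet I, v x = A.indicator (fun _ => b) x) :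
    sumTest q u v F =
      a ^ q * b * ∑' I : F, (volume.real (ivSet I ∩ A) / len I) ^ (q + 1) * len I := by
  rw [sumTest, ← tsum_mul_left]
  refine tsum_congr fun I => ?_
  have ht : 0 ≤ volume.real (ivSet I ∩ A) / len I := div_nonneg measureReal_nonneg (hF I I.2).le
  rw [avg, avg, mass_eq_of_eqOn_indicator hA (hu I I.2), mass_eq_of_eqOn_indicator hA (hv I I.2),
    mul_div_assoc, mul_div_assoc, Real.mul_rpow ha ht, Real.rpow_add_one' ht (by linarith)]
  ring

lemma sumTest_le_of_eqOn_indicator (hF : MSparse ε F) (hε : ε < 1) {L : ℝ × ℝ}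
    (hFL : ∀ I ∈ F, ivSet I ⊆ ivSet L) (hA : MeasurableSet A) {q : ℝ} (hq : 1 ≤ q)
    (ha : 0 ≤ a) (hb : 0 ≤ b)
    (hu : ∀ I ∈ F, ∀ x ∈ ivSet I, u x = A.indicator (fun _ => a) x)
    (hv : ∀ I ∈ F, ∀ x ∈ ivSet I, v x = A.indicator (fun _ => b) x) :
    sumTest q u v F ≤ 4 * (a ^ q * b * volume.real (ivSet L ∩ A)) / (1 - ε) := by
  rw [sumTest_eq_of_eqOn_indicator (by linarith) (fun I hI => hF.len_pos hI) hA ha hu hv]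
  calc a ^ q * b * ∑' I : F, (volume.real (ivSet I ∩ A) / len I) ^ (q + 1) * len I
      ≤ a ^ q * b * (4 * volume.real (ivSet L ∩ A) / (1 - ε)) :=
        mul_le_mul_of_nonneg_left (hF.tsum_rpow_avg_le hε hFL hA (by linarith)) (by positivity)
    _ = 4 * (a ^ q * b * volume.real (ivSet L ∩ A)) / (1 - ε) := by ring

end Testing

lemma rpow_mul_rpow_one_sub {c : ℝ} (hc : 0 < c) (p : ℝ) : c ^ p * c ^ (1 - p) = c := by
  rw [← Real.rpow_add hc, add_sub_cancel, Real.rpow_one]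

lemma rpow_one_sub_rpow_conjExponent_mul {c p : ℝ} (hc : 0 < c) (hp : 1 < p) :
    (c ^ (1 - p)) ^ (p / (p - 1)) * c = c ^ (1 - p) := by
  have hp' : p - 1 ≠ 0 := by linarith
  rw [← Real.rpow_mul hc.le, ← Real.rpow_add_one hc.ne']
  congr 1
  field_simp
  ring

section Vanishing

variable {k : ℕ} {ch : ℝ × ℝ → Bool}

lemma wgt_eqOn_indicator (hk : 1 ≤ k) {i : ℕ} {K I : ℝ × ℝ} (hK : K ∈ Kfam k i)
    (hIK : ivSet I ⊆ ivSet K) (hI : ∀ x ∈ ivSet I ∩ ivSet (mid K), wgt k ch x = 0) :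
    ∀ x ∈ ivSet I, wgt k ch x = (ivSet (IJ k ch (mid K))).indicator (fun _ => coefw k i) x := by
  intro x hx
  by_cases hm : x ∈ ivSet (mid K)
  · rw [hI x ⟨hx, hm⟩, Set.indicator_of_notMem (Set.disjoint_right.1 (disjoint_IJ k ch _) hm)]
  · exact wgt_eq_indicator hk hK (hIK hx) hm

lemma sgm_eq_indicator {p c : ℝ} (hc : 0 < c) {B : Set ℝ} {x : ℝ}
    (h : wgt k ch x = B.indicator (fun _ => c) x) :
    sgm p k ch x = B.indicator (fun _ => c ^ (1 - p)) x := by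
  by_cases hx : x ∈ B <;> simp [sgm, h, hx, hc]

end Vanishing

/-- Lemma 4.7 of the paper: testing sums over the family of intervals `I ∈ 𝒮` contained in
`L` on which `w_k, σ_k` vanish on `I ∩ J` (with `K ∈ 𝐊`, `L ⊆ K`, `J := K^m`) are bounded
by `C(p)·w_k(L)/(1-ε)` and `C(p)·σ_k(L)/(1-ε)`. -/
theorem statement8 (p : ℝ) (hp : 1 < p) :
    ∃ C : ℝ, 0 < C ∧ ∀ k : ℕ, 3000 < k → ∀ ch : ℝ × ℝ → Bool,
      ∀ ε : ℝ, 0 < ε → ε < 1 → ∀ S : Set (ℝ × ℝ), MSparse ε S →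
      (∀ I ∈ S, ivSet I ⊆ Set.Ico (0 : ℝ) 1) →
      ∀ L : ℝ × ℝ, 0 ≤ L.1 → L.1 < L.2 → L.2 ≤ 1 →
      ∀ K ∈ KK k, ivSet L ⊆ ivSet K →
        sumTest p (wgt k ch) (sgm p k ch)
            {I | I ∈ S ∧ ivSet I ⊆ ivSet L ∧
              ∀ x ∈ ivSet I ∩ ivSet (mid K), wgt k ch x = 0 ∧ sgm p k ch x = 0} ≤
          C * mass (wgt k ch) L / (1 - ε) ∧
        sumTest (p / (p - 1)) (sgm p k ch) (wgt k ch)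
            {I | I ∈ S ∧ ivSet I ⊆ ivSet L ∧
              ∀ x ∈ ivSet I ∩ ivSet (mid K), wgt k ch x = 0 ∧ sgm p k ch x = 0} ≤
          C * mass (sgm p k ch) L / (1 - ε) := by
  refine ⟨4, by norm_num, fun k hk3000 ch ε _ hε S hS _ L _ _ _ K hKK hLK => ?_⟩
  have hk : 1 ≤ k := by omega
  obtain ⟨i, hK⟩ := Set.mem_iUnion.1 hKK
  set A := ivSet (IJ k ch (mid K))
  set c := coefw k i
  have hA : MeasurableSet A := measurableSet_ivSet _
  have hc : 0 < c := one_pos.trans_le (one_le_coefw hk i)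
  have hwA : ∀ x ∈ ivSet L ∩ A, wgt k ch x = c := fun x hx => wgt_eq_coefw_of_mem hk hK hx.2
  set F := {I | I ∈ S ∧ ivSet I ⊆ ivSet L ∧
    ∀ x ∈ ivSet I ∩ ivSet (mid K), wgt k ch x = 0 ∧ sgm p k ch x = 0}
  have hF : MSparse ε F := hS.of_lowerClosed (fun I hI => hI.1) fun Q hQ R hR hQR =>
    ⟨hQ, hQR.trans hR.2.1, fun x hx => hR.2.2 x ⟨hQR hx.1, hx.2⟩⟩
  have hFL : ∀ I ∈ F, ivSet I ⊆ ivSet L := fun I hI => hI.2.1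
  have hw : ∀ I ∈ F, ∀ x ∈ ivSet I, wgt k ch x = A.indicator (fun _ => c) x := fun I hI =>
    wgt_eqOn_indicator hk hK (hI.2.1.trans hLK) fun x hx => (hI.2.2 x hx).1
  have hσ : ∀ I ∈ F, ∀ x ∈ ivSet I, sgm p k ch x = A.indicator (fun _ => c ^ (1 - p)) x :=
    fun I hI x hx => sgm_eq_indicator hc (hw I hI x hx)
  have hε' : 0 < 1 - ε := sub_pos.2 hε
  constructor
  · refine (sumTest_le_of_eqOn_indicator hF hε hFL hA hp.le hc.le (by positivity) hw hσ).trans ?_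
    rw [rpow_mul_rpow_one_sub hc]
    refine div_le_div_of_nonneg_right (mul_le_mul_of_nonneg_left ?_ (by norm_num)) hε'.le
    exact mul_measureReal_le_mass hA (integrable_wgt hk).integrableOn
      (fun x _ => wgt_nonneg k ch x) fun x hx => (hwA x hx).ge
  · have hq : 1 ≤ p / (p - 1) := (one_le_div (by linarith)).2 (by linarith)
    refine (sumTest_le_of_eqOn_indicator hF hε hFL hA hq (by positivity) hc.le hσ hw).trans ?_
    rw [rpow_one_sub_rpow_conjExponent_mul hc hp]
    refine div_le_div_of_nonneg_right (mul_le_mul_of_nonneg_left ?_ (by norm_num)) hε'.le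
    exact mul_measureReal_le_mass hA (integrableOn_sgm hk hp.le (volume_ivSet_ne_top L))
      (fun x _ => sgm_nonneg p k ch x) fun x hx => by simp [sgm, hwA x hx, hc]

end RTpaper
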